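/- For every constant C3 > 0 there exist constants C'' > 0 and c > 0 such that, for all sufficiently large n divisible by 4 and every integer i ≥ 1 with t0 + i·√n ≤ n/8, one has q_i ≤ C'' · p_i^{1 − c/log n}, where p_i = ∑_{j ∈ B_i} Pr(G = n/4 − j) and q_i = ∑_{j ∈ B_i} Pr(G = n/4 − j) · exp( 16·j² / (C3·n·log n) ), with B_i = { j ∈ ℤ : t0 + (i−1)·√n ≤ |j| < t0 + i·√n }. -/

import Mathlib

open scoped Classical
open Finset Filter

/-- `pG n k` is `Pr(G = k)` for the hypergeometric random variable `G(n, n/2, n/2)`,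
extended by `0` outside `{0, …, n/2}` (here `k : ℤ`). -/
noncomputable def pG (n : ℕ) (k : ℤ) : ℝ :=
  if 0 ≤ k then (((n / 2).choose k.toNat : ℝ)) ^ 2 / (n.choose (n / 2) : ℝ) else 0

/-- `t0 = √n · (log n)^{1/4}`. -/
noncomputable def t0 (n : ℕ) : ℝ := Real.sqrt n * Real.log n ^ ((1 : ℝ) / 4)

/-- The band `B_i = { j ∈ ℤ : t0 + (i−1)√n ≤ |j| < t0 + i√n }`. -/
noncomputable def band (n : ℕ) (i : ℕ) : Finset ℤ :=
  (Finset.Icc (-(n : ℤ)) (n : ℤ)).filter (fun j : ℤ =>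
    t0 n + ((i : ℝ) - 1) * Real.sqrt n ≤ |(j : ℝ)| ∧ |(j : ℝ)| < t0 n + (i : ℝ) * Real.sqrt n)

/-- `p_i = ∑_{j ∈ B_i} Pr(G = n/4 − j)`. -/
noncomputable def pBand (n : ℕ) (i : ℕ) : ℝ :=
  ∑ j ∈ band n i, pG n (((n / 4 : ℕ) : ℤ) - j)

/-- `q_i = ∑_{j ∈ B_i} Pr(G = n/4 − j) · exp(16j²/(C3 n log n))`. -/
noncomputable def qBand (C3 : ℝ) (n : ℕ) (i : ℕ) : ℝ :=
  ∑ j ∈ band n i,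
    pG n (((n / 4 : ℕ) : ℤ) - j) * Real.exp (16 * (j : ℝ) ^ 2 / (C3 * n * Real.log n))

/-! For `n = 4m` one has `Pr(G = m - j) = C(2m, m - |j|)² / C(4m, 2m) ≤ exp(-j²/m)`:
stepping away from the centre multiplies `C(2m, m - s)` by `(m - s)/(m + s + 1)`, which is at
most `exp(-(2s + 1)/(2m))`, and `C(2m, m)² ≤ C(4m, 2m)` by Vandermonde. Hence, if `T ≥ t0 ≥ √n`
is the inner radius of the band, `p_i ≤ P := (2n + 1) exp(-4T²/n)`. As the outer radius is at
most `2T`, the weight on the band is at most `exp(γ · 4T²/n)` with `γ = c / log n` and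
`c = 16 / C3`, and `γ log(2n + 1) ≤ 2c` makes this at most `e^{2c} P^{-γ} ≤ e^{2c} p_i^{-γ}`.
So `q_i ≤ e^{2c} p_i^{1 - γ}`. -/

open Real

theorem Nat.sq_choose_le_choose_two_mul (n k : ℕ) : n.choose k ^ 2 ≤ (2 * n).choose n := by
  rcases le_or_gt k n with hk | hk
  · rw [← Nat.sum_range_choose_sq]
    exact Finset.single_le_sum (f := fun i => n.choose i ^ 2) (fun _ _ => Nat.zero_le _)
      (Finset.mem_range.2 (Nat.lt_succ_of_le hk))
  · simp [Nat.choose_eq_zero_of_lt hk]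

theorem choose_two_mul_sub_le_mul_exp {a s : ℕ} (hs : s ≤ a) :
    ((2 * a).choose (a - s) : ℝ) ≤ (2 * a).choose a * exp (-(s : ℝ) ^ 2 / (2 * a)) := by
  induction s with
  | zero => simp
  | succ s ih =>
    have hsa : (s : ℝ) + 1 ≤ a := by exact_mod_cast hs
    have hrec : ((2 * a).choose (a - (s + 1)) : ℝ) * (a + s + 1) =
        (2 * a).choose (a - s) * (a - s) := by
      have h := Nat.choose_succ_right_eq (2 * a) (a - (s + 1))
      rw [show a - (s + 1) + 1 = a - s by omega,
        show 2 * a - (a - (s + 1)) = a + s + 1 by omega] at h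
      have h' := congrArg (Nat.cast : ℕ → ℝ) h
      push_cast [Nat.cast_sub (by omega : s ≤ a)] at h'
      linarith
    have hratio : (a - s : ℝ) ≤ (a + s + 1) * exp (-(2 * s + 1) / (2 * a)) := by
      have ha : (0 : ℝ) < 2 * a := by linarith [s.cast_nonneg (α := ℝ)]
      calc (a - s : ℝ) ≤ (a + s + 1) * (-(2 * s + 1) / (2 * a) + 1) := by
            rw [div_add_one ha.ne', mul_div_assoc', le_div_iff₀ ha]; nlinarith
        _ ≤ _ := by gcongr; exact add_one_le_exp _
    have hexp : exp (-(s : ℝ) ^ 2 / (2 * a)) * exp (-(2 * s + 1) / (2 * a)) =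
        exp (-((s + 1 : ℕ) : ℝ) ^ 2 / (2 * a)) := by
      rw [← exp_add]; push_cast; ring_nf
    refine le_of_mul_le_mul_right ?_ (by positivity : (0 : ℝ) < a + s + 1)
    calc ((2 * a).choose (a - (s + 1)) : ℝ) * (a + s + 1)
        = (2 * a).choose (a - s) * (a - s) := hrec
      _ ≤ (2 * a).choose (a - s) * ((a + s + 1) * exp (-(2 * s + 1) / (2 * a))) := by gcongr
      _ ≤ (2 * a).choose a * exp (-(s : ℝ) ^ 2 / (2 * a)) *
            ((a + s + 1) * exp (-(2 * s + 1) / (2 * a))) := by gcongr; exact ih (by omega)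
      _ = _ := by rw [← hexp]; ring

theorem pG_four_mul_sub_le {m : ℕ} {j : ℤ} (hj : j.natAbs ≤ m) :
    pG (4 * m) (m - j) ≤ exp (-(j : ℝ) ^ 2 / m) := by
  have hchoose : (2 * m).choose ((m : ℤ) - j).toNat = (2 * m).choose (m - j.natAbs) := by
    rcases (by omega : ((m : ℤ) - j).toNat = m - j.natAbs ∨
        ((m : ℤ) - j).toNat = 2 * m - (m - j.natAbs)) with h | h
    · rw [h]
    · rw [h, Nat.choose_symm (by omega)]
  have hcentral : ((2 * m).choose m : ℝ) ^ 2 ≤ (4 * m).choose (2 * m) := by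
    have h := Nat.sq_choose_le_choose_two_mul (2 * m) m
    rw [← mul_assoc] at h
    exact_mod_cast h
  have hsq : (j : ℝ) ^ 2 = (j.natAbs : ℝ) ^ 2 := by simp [Nat.cast_natAbs, sq_abs]
  have hpos : (0 : ℝ) < (4 * m).choose (2 * m) := by exact_mod_cast Nat.choose_pos (by omega)
  rw [pG, if_pos (by omega), show 4 * m / 2 = 2 * m by omega, hchoose, div_le_iff₀ hpos]
  calc ((2 * m).choose (m - j.natAbs) : ℝ) ^ 2
      ≤ ((2 * m).choose m * exp (-(j.natAbs : ℝ) ^ 2 / (2 * m))) ^ 2 := by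
        gcongr; exact choose_two_mul_sub_le_mul_exp hj
    _ = ((2 * m).choose m : ℝ) ^ 2 * exp (-(j : ℝ) ^ 2 / m) := by
        rw [mul_pow, ← exp_nat_mul, hsq]; push_cast; ring_nf
    _ ≤ (4 * m).choose (2 * m) * exp (-(j : ℝ) ^ 2 / m) := by gcongr
    _ = _ := mul_comm _ _

theorem pG_nonneg (n : ℕ) (k : ℤ) : 0 ≤ pG n k := by
  unfold pG; split_ifs <;> positivity

theorem t0_nonneg (n : ℕ) : 0 ≤ t0 n :=
  mul_nonneg (sqrt_nonneg _) (rpow_nonneg (log_natCast_nonneg n) _)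

theorem sqrt_le_t0 {n : ℕ} (h : 1 ≤ log n) : √(n : ℝ) ≤ t0 n :=
  le_mul_of_one_le_right (sqrt_nonneg _) (one_le_rpow h (by norm_num))

theorem log_two_mul_add_one_le {x : ℝ} (hx : 3 ≤ x) : log (2 * x + 1) ≤ 2 * log x :=
  calc log (2 * x + 1) ≤ log (x ^ 2) := log_le_log (by positivity) (by nlinarith)
    _ = 2 * log x := by rw [log_pow]; norm_num

theorem card_band_le (n i : ℕ) : #(band n i) ≤ 2 * n + 1 :=
  (card_filter_le _ _).trans_eq (by rw [Int.card_Icc]; omega)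

theorem pG_le_of_mem_band {n i : ℕ} {j : ℤ} (h4 : 4 ∣ n) (hi : 1 ≤ i)
    (hup : t0 n + i * √(n : ℝ) ≤ n / 8) (hj : j ∈ band n i) :
    pG n ((n / 4 : ℕ) - j) ≤ exp (-(4 * (t0 n + (i - 1) * √(n : ℝ)) ^ 2 / n)) := by
  obtain ⟨m, rfl⟩ := h4
  set T := t0 (4 * m) + (i - 1) * √((4 * m : ℕ) : ℝ)
  obtain ⟨hlow, hhigh⟩ := (mem_filter.1 hj).2
  have hT : 0 ≤ T := add_nonneg (t0_nonneg _) (mul_nonneg (by simpa using hi) (sqrt_nonneg _))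
  have hjm : (j.natAbs : ℝ) ≤ m := by
    rw [Nat.cast_natAbs, Int.cast_abs]; push_cast at hhigh hup; linarith
  have hj2 : T ^ 2 ≤ (j : ℝ) ^ 2 := by rw [← sq_abs (j : ℝ)]; gcongr
  have hdiv : 4 * T ^ 2 / ((4 * m : ℕ) : ℝ) = T ^ 2 / m := by
    push_cast; exact mul_div_mul_left _ _ four_ne_zero
  rw [Nat.mul_div_cancel_left m (by norm_num), hdiv]
  refine (pG_four_mul_sub_le (by exact_mod_cast hjm)).trans ?_
  rw [exp_le_exp, neg_div, neg_le_neg_iff]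
  gcongr

theorem pBand_nonneg (n i : ℕ) : 0 ≤ pBand n i :=
  sum_nonneg fun _ _ => pG_nonneg _ _

theorem pBand_le {n i : ℕ} (h4 : 4 ∣ n) (hi : 1 ≤ i)
    (hup : t0 n + i * √(n : ℝ) ≤ n / 8) :
    pBand n i ≤ (2 * n + 1) * exp (-(4 * (t0 n + (i - 1) * √(n : ℝ)) ^ 2 / n)) := by
  calc pBand n i ≤ #(band n i) • exp (-(4 * (t0 n + (i - 1) * √(n : ℝ)) ^ 2 / n)) :=
        sum_le_card_nsmul _ _ _ fun _ hj => pG_le_of_mem_band h4 hi hup hj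
    _ ≤ _ := by rw [nsmul_eq_mul]; gcongr; exact_mod_cast card_band_le n i

theorem qBand_le_pBand_mul_exp {C3 : ℝ} (hC3 : 0 ≤ C3) (n i : ℕ) :
    qBand C3 n i ≤ pBand n i * exp (16 * (t0 n + i * √(n : ℝ)) ^ 2 / (C3 * n * log n)) := by
  rw [pBand, sum_mul]
  refine sum_le_sum fun j hj => ?_
  have hpG := pG_nonneg n ((n / 4 : ℕ) - j)
  have hj2 : (j : ℝ) ^ 2 ≤ (t0 n + i * √(n : ℝ)) ^ 2 :=
    sq_le_sq' (by linarith [neg_abs_le (j : ℝ), (mem_filter.1 hj).2.2])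
      (le_abs_self _ |>.trans (mem_filter.1 hj).2.2.le)
  have := log_natCast_nonneg n
  gcongr

theorem exp_mul_le_exp_mul_rpow {γ x K b : ℝ} (hK : 0 < K) (hb : γ * log K ≤ b) :
    exp (γ * x) ≤ exp b * (K * exp (-x)) ^ (-γ) := by
  rw [rpow_def_of_pos (by positivity), log_mul hK.ne' (exp_ne_zero _), log_exp, ← exp_add,
    exp_le_exp]
  linarith

theorem le_mul_rpow_of_le_mul_mul_rpow_neg {p P q K γ : ℝ} (hp : 0 ≤ p) (hpP : p ≤ P)
    (hK : 0 ≤ K) (hγ : 0 ≤ γ) (hγ1 : γ < 1) (hq : q ≤ p * (K * P ^ (-γ))) :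
    q ≤ K * p ^ (1 - γ) := by
  rcases hp.eq_or_lt with rfl | hp
  · rw [zero_rpow (by linarith)]; simpa using hq
  calc q ≤ p * (K * p ^ (-γ)) := hq.trans <|
        mul_le_mul_of_nonneg_left (mul_le_mul_of_nonneg_left
          (rpow_le_rpow_of_nonpos hp hpP (by linarith)) hK) hp.le
    _ = K * p ^ (1 - γ) := by rw [sub_eq_add_neg, rpow_add hp, rpow_one]; ring

theorem band_contribution (C3 : ℝ) (hC3 : 0 < C3) :
    ∃ C'' : ℝ, 0 < C'' ∧ ∃ c : ℝ, 0 < c ∧ ∃ N : ℕ, ∀ n : ℕ, N ≤ n → 4 ∣ n →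
      ∀ i : ℕ, 1 ≤ i → t0 n + (i : ℝ) * Real.sqrt n ≤ (n : ℝ) / 8 →
        qBand C3 n i ≤ C'' * pBand n i ^ (1 - c / Real.log n) := by
  set c := 16 / C3
  obtain ⟨N, hN⟩ := eventually_atTop.1 <| (eventually_ge_atTop 3).and <|
    (tendsto_log_atTop.comp tendsto_natCast_atTop_atTop).eventually_gt_atTop (max 1 c)
  refine ⟨exp (2 * c), exp_pos _, c, by positivity, N, fun n hNn h4 i hi hup => ?_⟩
  obtain ⟨hn3, hL⟩ := hN n hNn
  rw [Function.comp_apply, max_lt_iff] at hL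
  set L := log n
  set T := t0 n + (i - 1) * √(n : ℝ)
  have hn : (3 : ℝ) ≤ n := by exact_mod_cast hn3
  have hsqrtT : √(n : ℝ) ≤ T := le_add_of_le_of_nonneg (sqrt_le_t0 hL.1.le)
    (mul_nonneg (by simpa using hi) (sqrt_nonneg _))
  have hlog : c / L * log (2 * n + 1) ≤ 2 * c := by
    calc c / L * log (2 * n + 1) ≤ c / L * (2 * L) := by
          gcongr; exact log_two_mul_add_one_le hn
      _ = 2 * c := by field_simp [(by linarith : L ≠ 0)]
  have hweight : 16 * (t0 n + i * √(n : ℝ)) ^ 2 / (C3 * n * L) ≤ c / L * (4 * T ^ 2 / n) := by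
    have hT' : t0 n + i * √(n : ℝ) = T + √(n : ℝ) := by ring
    calc 16 * (t0 n + i * √(n : ℝ)) ^ 2 / (C3 * n * L) ≤ 16 * (2 * T) ^ 2 / (C3 * n * L) := by
          rw [hT']; gcongr <;> linarith [sqrt_nonneg (n : ℝ)]
      _ = c / L * (4 * T ^ 2 / n) := by ring
  refine le_mul_rpow_of_le_mul_mul_rpow_neg (pBand_nonneg n i) (pBand_le h4 hi hup)
    (exp_pos _).le (by positivity) ((div_lt_one (by linarith)).2 hL.2) ?_
  calc qBand C3 n i ≤ pBand n i * exp (16 * (t0 n + i * √(n : ℝ)) ^ 2 / (C3 * n * L)) :=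
        qBand_le_pBand_mul_exp hC3.le n i
    _ ≤ _ := mul_le_mul_of_nonneg_left
        ((exp_le_exp.2 hweight).trans (exp_mul_le_exp_mul_rpow (by positivity) hlog))
        (pBand_nonneg n i)
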